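/- Let 𝒜 be a finite list in a finitely generated abelian group Γ, and let G₁, G₂ be torsion-wise finite abelian groups. Then the convolution formula holds: T_𝒜^{G₁×G₂}(x, y) = Σ_{ℬ⊂𝒜} T_ℬ^{G₁}(0, y) · T_{𝒜/ℬ}^{G₂}(x, 0), where the sum is over all sublists ℬ of 𝒜 and 𝒜/ℬ denotes the contraction of 𝒜 by ℬ inside Γ/⟨ℬ⟩. -/

import Mathlib

def TorsionwiseFinite (G : Type*) [AddCommGroup G] : Prop :=
  ∀ d : ℕ, 0 < d → Finite {x : G // d • x = 0}

noncomputable def rk (Γ : Type*) [AddCommGroup Γ] (X : Set Γ) : ℕ :=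
  Module.finrank ℤ (AddSubgroup.closure X)

noncomputable def mult (Γ : Type*) [AddCommGroup Γ] (G : Type*) [AddCommGroup G]
    (X : Set Γ) : ℕ :=
  Nat.card ((AddCommGroup.torsion (Γ ⧸ AddSubgroup.closure X)) →+ G)

noncomputable def Tpoly {ι Γ : Type*} [AddCommGroup Γ] (G : Type*) [AddCommGroup G]
    (A : Finset ι) (a : ι → Γ) (x y : ℤ) : ℤ :=
  ∑ S ∈ A.powerset, (mult Γ G (a '' (S : Set ι)) : ℤ) *
    (x - 1) ^ (rk Γ (a '' (A : Set ι)) - rk Γ (a '' (S : Set ι))) *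
    (y - 1) ^ (S.card - rk Γ (a '' (S : Set ι)))

/-!
Expand `T_ℬ^{G₁}(0, y)` over `S ⊆ ℬ` and `T_{𝒜/ℬ}^{G₂}(x, 0)` over `U = ℬ ∪ T ⊆ 𝒜`; in `Γ/⟨ℬ⟩`
the sublist `T` has multiplicity `m(ℬ ∪ T)` and rank `r(ℬ ∪ T) - r(ℬ)`. The right side becomes a
sum over chains `S ⊆ ℬ ⊆ U ⊆ 𝒜`, and since adding one vector raises the rank by at most one, the
sign of a term is `(-1)^(r S + r U + #(U \ ℬ))`. Summing over `ℬ` kills every chain with `S ≠ U`,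
leaving `Σ_S m(S;G₁) m(S;G₂) (x-1)^(r 𝒜 - r S) (y-1)^(#S - r S)`, which is `T_𝒜^{G₁×G₂}(x, y)`
by multiplicativity of `m`.
-/

open AddSubgroup Finset

lemma neg_one_pow_sub_mul_neg_one_pow_sub {R : Type*} [Ring R] {a b c d : ℕ}
    (hab : a ≤ b) (hbc : b ≤ c) (hcd : c ≤ b + d) :
    (-1 : R) ^ (b - a) * (-1) ^ (d - (c - b)) = (-1) ^ (a + c) * (-1) ^ d := by
  rw [← pow_add, ← pow_add, neg_one_pow_eq_pow_mod_two, neg_one_pow_eq_pow_mod_two (n := a + c + d)]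
  congr 1
  omega

namespace Finset
variable {ι R : Type*} [DecidableEq ι] [CommRing R]

lemma sum_Icc_neg_one_pow_card_sdiff {S U : Finset ι} (hSU : S ⊆ U) :
    ∑ B ∈ Icc S U, (-1 : R) ^ #(U \ B) = if S = U then 1 else 0 := by
  have hreindex : ∑ B ∈ Icc S U, (-1 : R) ^ #(U \ B) = ∑ D ∈ (U \ S).powerset, (-1 : R) ^ #D := by
    refine sum_nbij' (U \ ·) (U \ ·) (fun B hB ↦ ?_) (fun D hD ↦ ?_) (fun B hB ↦ ?_)
      (fun D hD ↦ ?_) fun _ _ ↦ rfl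
    · exact mem_powerset.2 (sdiff_subset_sdiff le_rfl (mem_Icc.1 hB).1)
    · have hDS : Disjoint S D := disjoint_of_subset_right (mem_powerset.1 hD) disjoint_sdiff
      exact mem_Icc.2 ⟨subset_sdiff.2 ⟨hSU, hDS⟩, sdiff_subset⟩
    · exact sdiff_sdiff_eq_self (mem_Icc.1 hB).2
    · exact sdiff_sdiff_eq_self ((mem_powerset.1 hD).trans sdiff_subset)
  have halt := congrArg (Int.cast : ℤ → R) (sum_powerset_neg_one_pow_card (x := U \ S))
  push_cast at halt
  rw [hreindex, halt]
  exact if_congr (sdiff_eq_empty_iff_subset.trans ⟨hSU.antisymm, fun h ↦ h ▸ le_rfl⟩) rfl rfl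

theorem sum_powerset_mul_sum_Icc_neg_one_pow (A : Finset ι) (r : Finset ι → ℕ) (hr : Monotone r)
    (hr_sdiff : ∀ ⦃B U⦄, B ⊆ U → r U ≤ r B + #(U \ B)) (f g : Finset ι → R) :
    ∑ B ∈ A.powerset, (∑ S ∈ B.powerset, f S * (-1) ^ (r B - r S)) *
        ∑ U ∈ Icc B A, g U * (-1) ^ (#(U \ B) - (r U - r B))
      = ∑ S ∈ A.powerset, f S * g S := by
  simp only [← Iic_eq_powerset]
  calc _ = ∑ B ∈ Iic A, ∑ S ∈ Iic B, ∑ U ∈ Icc B A,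
          f S * g U * (-1) ^ (r S + r U) * (-1) ^ #(U \ B) := by
        refine sum_congr rfl fun B hB ↦ ?_
        rw [sum_mul_sum]
        refine sum_congr rfl fun S hS ↦ sum_congr rfl fun U hU ↦ ?_
        obtain ⟨hBU, -⟩ := mem_Icc.1 hU
        rw [mul_assoc (f S * g U), ← neg_one_pow_sub_mul_neg_one_pow_sub (hr (mem_Iic.1 hS))
          (hr hBU) (hr_sdiff hBU)]
        ring
    _ = ∑ S ∈ Iic A, ∑ B ∈ Icc S A, ∑ U ∈ Icc B A,
          f S * g U * (-1) ^ (r S + r U) * (-1) ^ #(U \ B) :=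
        sum_comm' fun B S ↦ by simp only [mem_Iic, mem_Icc]; grind
    _ = ∑ S ∈ Iic A, ∑ U ∈ Icc S A, ∑ B ∈ Icc S U,
          f S * g U * (-1) ^ (r S + r U) * (-1) ^ #(U \ B) :=
        sum_congr rfl fun S _ ↦ sum_comm' fun B U ↦ by simp only [mem_Icc]; grind
    _ = ∑ S ∈ Iic A, ∑ U ∈ Icc S A, if S = U then f S * g U * (-1) ^ (r S + r U) else 0 := by
        refine sum_congr rfl fun S _ ↦ sum_congr rfl fun U hU ↦ ?_
        rw [← mul_sum, sum_Icc_neg_one_pow_card_sdiff (mem_Icc.1 hU).1, mul_ite, mul_one, mul_zero]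
    _ = ∑ S ∈ Iic A, f S * g S := by
        refine sum_congr rfl fun S hS ↦ ?_
        rw [sum_ite_eq, if_pos (mem_Icc.2 ⟨le_rfl, mem_Iic.1 hS⟩), Even.neg_one_pow ⟨_, rfl⟩,
          mul_one]

end Finset

section Rank

variable {Γ : Type*} [AddCommGroup Γ]

lemma mult_prod (G₁ G₂ : Type*) [AddCommGroup G₁] [AddCommGroup G₂] (X : Set Γ) :
    mult Γ (G₁ × G₂) X = mult Γ G₁ X * mult Γ G₂ X := by
  rw [mult, mult, mult, ← Nat.card_prod]
  exact Nat.card_congr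
    { toFun f := ((AddMonoidHom.fst G₁ G₂).comp f, (AddMonoidHom.snd G₁ G₂).comp f)
      invFun p := p.1.prod p.2
      left_inv _ := rfl
      right_inv _ := rfl }

lemma mult_congr {Γ' : Type*} [AddCommGroup Γ'] (G : Type*) [AddCommGroup G] {X : Set Γ}
    {Y : Set Γ'} (e : Γ ⧸ closure X ≃+ Γ' ⧸ closure Y) : mult Γ G X = mult Γ' G Y :=
  Nat.card_congr (AddEquiv.addMonoidHomCongrLeft ((e.addSubgroupMap _).trans
    (AddEquiv.addSubgroupCongr e.map_torsion))).toEquiv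

lemma closure_image_mk'_eq_map (X Y : Set Γ) :
    closure (QuotientAddGroup.mk' (closure X) '' Y)
      = (closure (X ∪ Y)).map (QuotientAddGroup.mk' (closure X)) := by
  rw [AddMonoidHom.map_closure]
  refine le_antisymm (closure_mono (Set.image_mono Set.subset_union_right)) (closure_le _ |>.2 ?_)
  rintro _ ⟨z, hz | hz, rfl⟩
  · rw [SetLike.mem_coe, QuotientAddGroup.mk'_apply,
      (QuotientAddGroup.eq_zero_iff z).2 (subset_closure hz)]
    exact zero_mem _
  · exact subset_closure ⟨z, hz, rfl⟩

lemma mult_quotient_closure (G : Type*) [AddCommGroup G] (X Y : Set Γ) :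
    mult (Γ ⧸ closure X) G (QuotientAddGroup.mk' (closure X) '' Y) = mult Γ G (X ∪ Y) :=
  mult_congr G <| (QuotientAddGroup.quotientAddEquivOfEq (closure_image_mk'_eq_map X Y)).trans
    (QuotientAddGroup.quotientQuotientEquivQuotient _ _ (closure_mono Set.subset_union_left))

lemma rk_image_le_card {ι : Type*} (a : ι → Γ) (s : Finset ι) : rk Γ (a '' s) ≤ #s := by
  classical
  rw [rk, ← Submodule.span_int_eq_addSubgroupClosure, ← coe_image]
  exact (finrank_span_finset_le_card _).trans card_image_le

variable [Module.Finite ℤ Γ]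

instance AddSubgroup.moduleFinite_int (L : AddSubgroup Γ) : Module.Finite ℤ L :=
  inferInstanceAs (Module.Finite ℤ (toIntSubmodule L))

lemma AddMonoidHom.finrank_range_add_finrank_ker {N : Type*} [AddCommGroup N] (f : Γ →+ N) :
    Module.finrank ℤ f.range + Module.finrank ℤ f.ker = Module.finrank ℤ Γ := by
  rw [← (QuotientAddGroup.quotientKerEquivRange f).toIntLinearEquiv.finrank_eq]
  exact (toIntSubmodule f.ker).finrank_quotient_add_finrank

lemma rk_mono {X Y : Set Γ} (h : X ⊆ Y) : rk Γ X ≤ rk Γ Y :=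
  Submodule.finrank_mono (R := ℤ) (M := Γ) (toIntSubmodule.monotone (closure_mono h))

lemma rk_quotient_closure_add (X Y : Set Γ) :
    rk (Γ ⧸ closure X) (QuotientAddGroup.mk' (closure X) '' Y) + rk Γ X = rk Γ (X ∪ Y) := by
  set L := closure (X ∪ Y)
  have hker :
      ((QuotientAddGroup.mk' (closure X)).comp L.subtype).ker = (closure X).addSubgroupOf L := by
    rw [← AddMonoidHom.comap_ker, QuotientAddGroup.ker_mk']
    rfl
  have h := ((QuotientAddGroup.mk' (closure X)).comp L.subtype).finrank_range_add_finrank_ker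
  have hK : Module.finrank ℤ ((closure X).addSubgroupOf L) = Module.finrank ℤ (closure X) :=
    (addSubgroupOfEquivOfLe (closure_mono Set.subset_union_left)).toIntLinearEquiv.finrank_eq
  rw [AddMonoidHom.range_comp, range_subtype, hker, hK] at h
  rw [rk, rk, rk, closure_image_mk'_eq_map, h]

end Rank

section Tutte

variable {ι Γ : Type*} [AddCommGroup Γ] (a : ι → Γ)

lemma rk_image_le_rk_add_card_sdiff [DecidableEq ι] [Module.Finite ℤ Γ] {B U : Finset ι}
    (h : B ⊆ U) : rk Γ (a '' U) ≤ rk Γ (a '' B) + #(U \ B) := by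
  have hadd := rk_quotient_closure_add (a '' B) (a '' ↑(U \ B))
  rw [← Set.image_union, ← coe_union, union_sdiff_of_subset h, ← Set.image_comp] at hadd
  have := rk_image_le_card (QuotientAddGroup.mk' (closure (a '' B)) ∘ a) (U \ B)
  omega

lemma Tpoly_prod (G₁ G₂ : Type*) [AddCommGroup G₁] [AddCommGroup G₂] (A : Finset ι) (x y : ℤ) :
    Tpoly (G₁ × G₂) A a x y = ∑ S ∈ A.powerset,
      mult Γ G₁ (a '' S) * (y - 1) ^ (#S - rk Γ (a '' S)) *
        (mult Γ G₂ (a '' S) * (x - 1) ^ (rk Γ (a '' A) - rk Γ (a '' S))) := by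
  refine sum_congr rfl fun S _ ↦ ?_
  rw [mult_prod]
  push_cast
  ring

lemma Tpoly_zero_left (G : Type*) [AddCommGroup G] (B : Finset ι) (y : ℤ) :
    Tpoly G B a 0 y = ∑ S ∈ B.powerset,
      mult Γ G (a '' S) * (y - 1) ^ (#S - rk Γ (a '' S)) *
        (-1) ^ (rk Γ (a '' B) - rk Γ (a '' S)) := by
  refine sum_congr rfl fun S _ ↦ ?_
  rw [zero_sub]
  ring

lemma Tpoly_contraction_zero_right [DecidableEq ι] [Module.Finite ℤ Γ] (G : Type*)
    [AddCommGroup G] {A B : Finset ι} (hBA : B ⊆ A) (x : ℤ) :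
    Tpoly G (A \ B) (fun i ↦ QuotientAddGroup.mk' (closure (a '' B)) (a i)) x 0
      = ∑ U ∈ Icc B A, mult Γ G (a '' U) * (x - 1) ^ (rk Γ (a '' A) - rk Γ (a '' U)) *
          (-1) ^ (#(U \ B) - (rk Γ (a '' U) - rk Γ (a '' B))) := by
  have hdisj : ∀ T ∈ (A \ B).powerset, Disjoint B T := fun T hT ↦
    disjoint_of_subset_right (mem_powerset.1 hT) disjoint_sdiff
  rw [Icc_eq_image_powerset hBA, sum_image fun T hT T' hT' h ↦ by
    rw [← union_sdiff_cancel_left (hdisj T hT), h, union_sdiff_cancel_left (hdisj T' hT')]]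
  set π := QuotientAddGroup.mk' (closure (a '' B))
  have hrk (T : Finset ι) :
      rk (Γ ⧸ closure (a '' B)) ((fun i ↦ π (a i)) '' T) + rk Γ (a '' B)
        = rk Γ (a '' ↑(B ∪ T)) := by
    rw [coe_union, Set.image_union, ← rk_quotient_closure_add, Set.image_image]
  have hmult (T : Finset ι) :
      mult (Γ ⧸ closure (a '' B)) G ((fun i ↦ π (a i)) '' T) = mult Γ G (a '' ↑(B ∪ T)) := by
    rw [coe_union, Set.image_union, ← mult_quotient_closure, Set.image_image]
  have hrkA := hrk (A \ B)
  rw [union_sdiff_of_subset hBA] at hrkA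
  refine sum_congr rfl fun T hT ↦ ?_
  have hrkT := hrk T
  rw [hmult, union_sdiff_cancel_left (hdisj T hT), zero_sub]
  congr 3 <;> omega

end Tutte

theorem tutte_convolution_general {ι Γ : Type*} [DecidableEq ι] [AddCommGroup Γ] [AddGroup.FG Γ]
    (G₁ G₂ : Type*) [AddCommGroup G₁] [AddCommGroup G₂]
    (A : Finset ι) (a : ι → Γ) :
    ∀ x y : ℤ, Tpoly (G₁ × G₂) A a x y =
      ∑ B ∈ A.powerset, Tpoly G₁ B a 0 y *
        Tpoly G₂ (A \ B)
          (fun i => QuotientAddGroup.mk' (AddSubgroup.closure (a '' (B : Set ι))) (a i))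
          x 0 := by
  intro x y
  rw [Tpoly_prod, ← sum_powerset_mul_sum_Icc_neg_one_pow A (fun S ↦ rk Γ (a '' S))
    (fun _ _ h ↦ rk_mono (Set.image_mono h)) (fun _ _ h ↦ rk_image_le_rk_add_card_sdiff a h)]
  refine sum_congr rfl fun B hB ↦ ?_
  rw [Tpoly_zero_left, Tpoly_contraction_zero_right a G₂ (mem_powerset.1 hB)]

/-- The convolution formula:
`T_𝒜^{G₁×G₂}(x,y) = Σ_{ℬ⊆𝒜} T_ℬ^{G₁}(0,y) · T_{𝒜/ℬ}^{G₂}(x,0)`, where `𝒜/ℬ` is the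
contraction of `𝒜` by `ℬ` inside `Γ/⟨ℬ⟩`. -/
theorem tutte_convolution {ι Γ : Type*} [DecidableEq ι] [AddCommGroup Γ] [AddGroup.FG Γ]
    (G₁ G₂ : Type*) [AddCommGroup G₁] [AddCommGroup G₂]
    (hG₁ : TorsionwiseFinite G₁) (hG₂ : TorsionwiseFinite G₂)
    (A : Finset ι) (a : ι → Γ) :
    ∀ x y : ℤ, Tpoly (G₁ × G₂) A a x y =
      ∑ B ∈ A.powerset, Tpoly G₁ B a 0 y *
        Tpoly G₂ (A \ B)
          (fun i => QuotientAddGroup.mk' (AddSubgroup.closure (a '' (B : Set ι))) (a i))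
          x 0 :=
  tutte_convolution_general G₁ G₂ A a
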